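/- arXiv:1801.05911 — 2 statements merged into one kernel-verified Lean document; each statement's English description precedes it below -/
import Mathlib

section
/- For k ≥ 3 candidates and an even number n of voters, if a candidate x is ranked last by at least n/2 voters and x is a Borda winner, then every candidate is a Borda winner (all candidates have equal Borda score); moreover this forces x to be ranked first by the other n/2 voters. -/
/-!
A ranking of k candidates hands out 0 + 1 + ⋯ + (k - 1) points, so the average Borda score is
n(k - 1)/2 and a Borda winner x scores at least that. On the other hand, the at least n/2 voters
ranking x last give it nothing and each of the others at most k - 1, so x scores at most
n(k - 1)/2. Equality throughout forces every score to equal the average, and every voter not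
ranking x last to give it the full k - 1 points, i.e. to rank it first.
-/

open Finset
open scoped Classical

section StrictTotalOrder

variable {α : Type*} [Fintype α] (r : α → α → Prop)

noncomputable def bordaPoints (a : α) : ℕ := #{b | r a b}

variable {r}

theorem natCard_subtype_eq_bordaPoints (a : α) : Nat.card {b // r a b} = bordaPoints r a := by
  rw [Nat.card_eq_fintype_card, Fintype.card_subtype, bordaPoints]

theorem bordaPoints_eq_zero [Std.Asymm r] {a : α} (h : ∀ b ≠ a, r b a) :
    bordaPoints r a = 0 := by
  refine card_eq_zero.2 (filter_eq_empty_iff.2 fun b _ hab => ?_)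
  exact asymm hab (h b (ne_of_irrefl' hab))

variable [IsStrictTotalOrder α r]

theorem bordaPoints_add_card_filter_flip (a : α) :
    bordaPoints r a + #{b | r b a} = Fintype.card α - 1 := by
  rw [bordaPoints, ← card_union_of_disjoint, ← filter_or]
  · rw [← card_univ, ← card_erase_of_mem (mem_univ a), ← filter_ne']
    congr 1
    ext b
    simp only [mem_filter, mem_univ, true_and]
    constructor
    · rintro (h | h)
      exacts [ne_of_irrefl' h, ne_of_irrefl h]
    · intro h
      rcases trichotomous_of r a b with h' | rfl | h'
      exacts [Or.inl h', absurd rfl h, Or.inr h']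
  · exact disjoint_filter.2 fun b _ hab hba => asymm hab hba

theorem bordaPoints_le (a : α) : bordaPoints r a ≤ Fintype.card α - 1 :=
  (bordaPoints_add_card_filter_flip (r := r) a).symm ▸ Nat.le_add_right _ _

theorem forall_rel_of_bordaPoints_eq {a : α} (h : bordaPoints r a = Fintype.card α - 1) :
    ∀ b ≠ a, r a b := by
  have hflip : #{b | r b a} = 0 := by
    have := bordaPoints_add_card_filter_flip (r := r) a
    omega
  intro b hb
  rcases trichotomous_of r a b with hab | rfl | hba
  · exact hab
  · exact absurd rfl hb
  · exact absurd hba (filter_eq_empty_iff.1 (card_eq_zero.1 hflip) (mem_univ b))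

theorem two_mul_sum_bordaPoints :
    2 * ∑ a, bordaPoints r a = Fintype.card α * (Fintype.card α - 1) := by
  have hflip : ∑ a, #{b | r b a} = ∑ a, bordaPoints r a :=
    (sum_card_bipartiteAbove_eq_sum_card_bipartiteBelow (s := univ) (t := univ) r).symm
  calc 2 * ∑ a, bordaPoints r a = ∑ a, (bordaPoints r a + #{b | r b a}) := by
        rw [sum_add_distrib, hflip, two_mul]
    _ = Fintype.card α * (Fintype.card α - 1) := by
        simp only [bordaPoints_add_card_filter_flip, sum_const, card_univ, smul_eq_mul]

end StrictTotalOrder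

section Profile

variable {ι α : Type*} [Fintype ι] [Fintype α] (P : ι → α → α → Prop)

noncomputable def bordaScore (a : α) : ℕ := ∑ i, bordaPoints (P i) a

variable {P}

theorem sum_natCard_eq_bordaScore (a : α) :
    ∑ i, Nat.card {b // P i a b} = bordaScore P a := by
  simp only [natCard_subtype_eq_bordaPoints, bordaScore]

theorem bordaScore_eq_sum_compl [DecidableEq ι] [∀ i, Std.Asymm (P i)] {L : Finset ι} {x : α}
    (hL : ∀ i ∈ L, ∀ y ≠ x, P i y x) : bordaScore P x = ∑ i ∈ Lᶜ, bordaPoints (P i) x := by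
  rw [bordaScore, ← sum_add_sum_compl L, sum_eq_zero fun i hi => bordaPoints_eq_zero (hL i hi),
    zero_add]

variable [∀ i, IsStrictTotalOrder α (P i)]

theorem bordaScore_le_card_compl_mul [DecidableEq ι] {L : Finset ι} {x : α}
    (hL : ∀ i ∈ L, ∀ y ≠ x, P i y x) :
    bordaScore P x ≤ #Lᶜ * (Fintype.card α - 1) := by
  rw [bordaScore_eq_sum_compl hL, ← smul_eq_mul]
  exact sum_le_card_nsmul _ _ _ fun i _ => bordaPoints_le x

theorem forall_rel_of_bordaScore_eq [DecidableEq ι] {L : Finset ι} {x : α}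
    (hL : ∀ i ∈ L, ∀ y ≠ x, P i y x)
    (h : bordaScore P x = #Lᶜ * (Fintype.card α - 1)) : ∀ i ∉ L, ∀ y ≠ x, P i x y := by
  rw [bordaScore_eq_sum_compl hL, ← smul_eq_mul, ← sum_const] at h
  have hpts := (sum_eq_sum_iff_of_le fun i _ => bordaPoints_le x).1 h
  exact fun i hi => forall_rel_of_bordaPoints_eq (hpts i (mem_compl.2 hi))

theorem two_mul_sum_bordaScore :
    2 * ∑ a, bordaScore P a = Fintype.card ι * (Fintype.card α * (Fintype.card α - 1)) := by
  simp only [bordaScore]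
  rw [sum_comm, mul_sum]
  simp only [two_mul_sum_bordaPoints, sum_const, card_univ, smul_eq_mul]

theorem card_mul_le_two_mul_bordaScore {x : α} (hwin : ∀ z, bordaScore P z ≤ bordaScore P x) :
    Fintype.card ι * (Fintype.card α - 1) ≤ 2 * bordaScore P x := by
  have hk : 0 < Fintype.card α := Fintype.card_pos_iff.2 ⟨x⟩
  refine le_of_mul_le_mul_left ?_ hk
  calc Fintype.card α * (Fintype.card ι * (Fintype.card α - 1))
      = 2 * ∑ a, bordaScore P a := by rw [two_mul_sum_bordaScore]; ring
    _ ≤ 2 * ∑ _a : α, bordaScore P x := by gcongr with a; exact hwin a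
    _ = Fintype.card α * (2 * bordaScore P x) := by rw [sum_const, card_univ, smul_eq_mul]; ring

theorem bordaScore_eq_of_two_mul_le {x : α} (hwin : ∀ z, bordaScore P z ≤ bordaScore P x)
    (h : 2 * bordaScore P x ≤ Fintype.card ι * (Fintype.card α - 1)) :
    ∀ z, bordaScore P z = bordaScore P x := by
  have hsum : ∑ a, bordaScore P a = ∑ _a : α, bordaScore P x := by
    refine le_antisymm (sum_le_sum fun a _ => hwin a) (le_of_mul_le_mul_left ?_ two_pos)
    calc 2 * ∑ _a : α, bordaScore P x = Fintype.card α * (2 * bordaScore P x) := by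
          rw [sum_const, card_univ, smul_eq_mul]; ring
      _ ≤ Fintype.card α * (Fintype.card ι * (Fintype.card α - 1)) := by gcongr
      _ = 2 * ∑ a, bordaScore P a := by rw [two_mul_sum_bordaScore]; ring
  exact fun z => (sum_eq_sum_iff_of_le fun a _ => hwin a).1 hsum z (mem_univ z)

end Profile

theorem borda_social_disappointment_even_forces_tie_general
    (A : Type) [Fintype A]
    (n : ℕ)
    (P : Fin n → A → A → Prop) (hP : ∀ i, IsStrictTotalOrder A (P i))
    (x : A)
    (hlast : n ≤ 2 * Nat.card {i : Fin n // ∀ y : A, y ≠ x → P i y x})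
    (hwin : ∀ z : A,
        (∑ i : Fin n, Nat.card {y : A // P i z y}) ≤
        (∑ i : Fin n, Nat.card {y : A // P i x y})) :
    (∀ z : A,
        (∑ i : Fin n, Nat.card {y : A // P i z y}) =
        (∑ i : Fin n, Nat.card {y : A // P i x y})) ∧
    (∀ i : Fin n, ¬ (∀ y : A, y ≠ x → P i y x) → (∀ y : A, y ≠ x → P i x y)) := by
  have := hP
  set k := Fintype.card A
  set L : Finset (Fin n) := {i | ∀ y ≠ x, P i y x}
  have hL : ∀ i ∈ L, ∀ y ≠ x, P i y x := fun i hi => (mem_filter.1 hi).2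
  have hcompl : 2 * #Lᶜ ≤ n := by
    have hcard : Nat.card {i // ∀ y ≠ x, P i y x} = #L := by
      rw [Nat.card_eq_fintype_card, Fintype.card_subtype]
    rw [card_compl, Fintype.card_fin]
    omega
  simp only [sum_natCard_eq_bordaScore] at hwin ⊢
  have hlow : n * (k - 1) ≤ 2 * bordaScore P x := by
    simpa only [Fintype.card_fin] using card_mul_le_two_mul_bordaScore hwin
  have hup : bordaScore P x ≤ #Lᶜ * (k - 1) := bordaScore_le_card_compl_mul hL
  have hhalf : 2 * (#Lᶜ * (k - 1)) ≤ n * (k - 1) := by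
    rw [← mul_assoc]
    gcongr
  have hx : bordaScore P x = #Lᶜ * (k - 1) := by omega
  have hmax : 2 * bordaScore P x ≤ n * (k - 1) := by omega
  refine ⟨bordaScore_eq_of_two_mul_le hwin (by rwa [Fintype.card_fin]), fun i hi => ?_⟩
  exact forall_rel_of_bordaScore_eq hL hx i (by simpa [L] using hi)

/-- For k ≥ 3 candidates and an even number n of voters: if x is ranked last by at
least n/2 voters and x is a Borda winner, then all candidates have equal Borda
score (so all are winners), and x is ranked first by every voter not ranking x last. -/
theorem borda_social_disappointment_even_forces_tie
    (A : Type) [Fintype A] (hA : 3 ≤ Fintype.card A)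
    (n : ℕ) (heven : Even n)
    (P : Fin n → A → A → Prop) (hP : ∀ i, IsStrictTotalOrder A (P i))
    (x : A)
    (hlast : n ≤ 2 * Nat.card {i : Fin n // ∀ y : A, y ≠ x → P i y x})
    (hwin : ∀ z : A,
        (∑ i : Fin n, Nat.card {y : A // P i z y}) ≤
        (∑ i : Fin n, Nat.card {y : A // P i x y})) :
    (∀ z : A,
        (∑ i : Fin n, Nat.card {y : A // P i z y}) =
        (∑ i : Fin n, Nat.card {y : A // P i x y})) ∧
    (∀ i : Fin n, ¬ (∀ y : A, y ≠ x → P i y x) → (∀ y : A, y ≠ x → P i x y)) :=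
  borda_social_disappointment_even_forces_tie_general A n P hP x hlast hwin
end

section
/- The Least Unpopular Reselection (LUR) procedure satisfies the always-a-winner criterion and the social disappointment criterion (for |A| ≥ 3). -/
/-!
A voter ranks at most one alternative of the surviving set `S` last, so the last-place counts
of the members of `S` sum to at most `n`. A survivor of a round has the least count, hence
`#S` times its count is at most `n`. In the first round `S` is all of `A` with `#A ≥ 3`, so a
survivor has at most `n / 3 < n / 2` last-place votes when `n > 0`. A round never empties the
set, since a minimiser of the count survives it.
-/

open Classical in
/-- Number of voters who rank `x` last among the surviving set `S`. -/
noncomputable def lastPlaceVotes {A : Type} [Fintype A] {n : ℕ}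
    (P : Fin n → A → A → Prop) (S : Finset A) (x : A) : ℕ :=
  Nat.card {i : Fin n // ∀ y ∈ S, y ≠ x → P i y x}

open Classical in
/-- One round of the Least Unpopular Reselection (LUR) procedure: keep only the
surviving alternatives with the fewest last-place votes among the survivors. -/
noncomputable def lurStep {A : Type} [Fintype A] {n : ℕ}
    (P : Fin n → A → A → Prop) (S : Finset A) : Finset A :=
  S.filter (fun x => ∀ y ∈ S, lastPlaceVotes P S x ≤ lastPlaceVotes P S y)

/-- The LUR winners: repeatedly keep the alternatives with the fewest last-place
votes among the survivors until the surviving set stabilizes. -/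
noncomputable def lurWinners {A : Type} [Fintype A] {n : ℕ}
    (P : Fin n → A → A → Prop) : Finset A :=
  (lurStep P)^[Fintype.card A] Finset.univ

open Finset

section

variable {A : Type} [Fintype A] {n : ℕ} (P : Fin n → A → A → Prop)

open Classical in
theorem lastPlaceVotes_eq_card_filter (S : Finset A) (x : A) :
    lastPlaceVotes P S x = #{i | ∀ y ∈ S, y ≠ x → P i y x} := by
  rw [lastPlaceVotes, Nat.card_eq_fintype_card, Fintype.card_subtype]

theorem lastPlaceVotes_univ (x : A) :
    lastPlaceVotes P univ x = Nat.card {i : Fin n // ∀ y : A, y ≠ x → P i y x} := by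
  simp only [lastPlaceVotes, mem_univ, true_implies]

open Classical in
theorem sum_lastPlaceVotes_le [∀ i, Std.Asymm (P i)] (S : Finset A) :
    ∑ t ∈ S, lastPlaceVotes P S t ≤ n := by
  have hdisj : (S : Set A).PairwiseDisjoint
      fun t => ({i | ∀ y ∈ S, y ≠ t → P i y t} : Finset (Fin n)) := by
    intro t ht t' ht' hne
    refine Finset.disjoint_left.2 fun i hi hi' => ?_
    simp only [mem_filter, mem_univ, true_and] at hi hi'
    exact asymm (hi t' ht' hne.symm) (hi' t ht hne)
  simp only [lastPlaceVotes_eq_card_filter]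
  rw [← card_biUnion hdisj]
  exact (card_le_univ _).trans_eq (Fintype.card_fin n)

theorem mem_lurStep {S : Finset A} {x : A} :
    x ∈ lurStep P S ↔ x ∈ S ∧ ∀ y ∈ S, lastPlaceVotes P S x ≤ lastPlaceVotes P S y := by
  simp only [lurStep, mem_filter]

theorem lurStep_subset (S : Finset A) : lurStep P S ⊆ S :=
  fun _ hx => ((mem_lurStep P).1 hx).1

theorem lastPlaceVotes_le_of_mem_lurStep {S : Finset A} {x y : A} (hx : x ∈ lurStep P S)
    (hy : y ∈ S) : lastPlaceVotes P S x ≤ lastPlaceVotes P S y :=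
  ((mem_lurStep P).1 hx).2 y hy

theorem lurStep_nonempty {S : Finset A} (hS : S.Nonempty) : (lurStep P S).Nonempty := by
  obtain ⟨x, hx, hmin⟩ := S.exists_min_image (lastPlaceVotes P S) hS
  exact ⟨x, (mem_lurStep P).2 ⟨hx, hmin⟩⟩

theorem card_mul_lastPlaceVotes_le_of_mem_lurStep [∀ i, Std.Asymm (P i)] {S : Finset A} {x : A}
    (hx : x ∈ lurStep P S) : #S * lastPlaceVotes P S x ≤ n :=
  calc #S * lastPlaceVotes P S x
      ≤ ∑ t ∈ S, lastPlaceVotes P S t :=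
        card_nsmul_le_sum _ _ _ fun _ hy => lastPlaceVotes_le_of_mem_lurStep P hx hy
    _ ≤ n := sum_lastPlaceVotes_le P S

theorem lurWinners_nonempty [Nonempty A] : (lurWinners P).Nonempty := by
  rw [lurWinners]
  induction Fintype.card A with
  | zero => exact univ_nonempty
  | succ k ih => exact Function.iterate_succ_apply' (lurStep P) k univ ▸ lurStep_nonempty P ih

theorem lurWinners_subset_lurStep_univ [Nonempty A] : lurWinners P ⊆ lurStep P univ := by
  have hdefl : lurStep P ≤ id := lurStep_subset P
  exact Function.antitone_iterate_of_le_id hdefl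
    (Nat.one_le_iff_ne_zero.2 (Fintype.card_ne_zero (α := A))) univ

end

/-- The LUR procedure satisfies the always-a-winner criterion and, for |A| ≥ 3,
the social disappointment criterion. -/
theorem lur_satisfies_aaw_and_sdc
    (A : Type) [Fintype A] (hA : 3 ≤ Fintype.card A)
    (n : ℕ) (hn : 0 < n)
    (P : Fin n → A → A → Prop) (hP : ∀ i, IsStrictTotalOrder A (P i)) :
    -- always a winner
    (lurWinners P).Nonempty ∧
    -- social disappointment criterion
    (∀ x : A,
      n ≤ 2 * Nat.card {i : Fin n // ∀ y : A, y ≠ x → P i y x} →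
      x ∉ lurWinners P) := by
  have : Nonempty A := Fintype.card_pos_iff.1 (by omega)
  refine ⟨lurWinners_nonempty P, fun x hhalf hwin => ?_⟩
  have hsurvives := lurWinners_subset_lurStep_univ P hwin
  have hbound := card_mul_lastPlaceVotes_le_of_mem_lurStep P hsurvives
  rw [card_univ, lastPlaceVotes_univ] at hbound
  nlinarith
end
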